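/- arXiv:2406.12413 — 5 statements merged into one kernel-verified Lean document; each statement's English description precedes it below -/
import Mathlib

section
/- There exists an instance with 3 agents, 6 goods, and additive valuations taking at most 3 distinct values, such that no partial allocation in which every agent's bundle has cardinality at most 2 is simultaneously 2/3-EFX and free of critical goods (where a good g in the pool is critical for agent i if v_i(g) > (1/2)·v_i(X_i)). -/
/-!
Goods `0` and `1` are worth `1` to everyone. If one of them stayed in the pool it would be
critical for every agent, since no bundle of at most two goods missing it is worth `2`. So both
are allocated and some agent `c` receives neither; her bundle is then worth at most
`61/100 < 2/3` to her, so 2/3-EFX towards her forces the bundles containing goods `0` and `1`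
to be singletons. Now every agent values her bundle at most `1 < 6/5`, so each agent's own good
(worth `3/5` to her) is allocated, and the only bundle that can take these three goods is `X c`,
which has room for two.
-/

open Finset

section Allocation

variable {ι α : Type*}

def NoCriticalGood (v : ι → α → ℝ) (X : ι → Finset α) : Prop :=
  ∀ i, ∀ g, (∀ j, g ∉ X j) → v i g ≤ (1/2) * ∑ x ∈ X i, v i x

theorem NoCriticalGood.exists_mem {v : ι → α → ℝ} {X : ι → Finset α} (h : NoCriticalGood v X)
    {i : ι} {g : α} (hlt : ∑ x ∈ X i, v i x < 2 * v i g) : ∃ j, g ∈ X j := by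
  by_contra! hg
  linarith [h i g hg]

variable [DecidableEq α]

def IsTwoThirdsEFX (v : ι → α → ℝ) (X : ι → Finset α) : Prop :=
  ∀ i j, ∀ g ∈ X j, (∑ x ∈ X i, v i x) ≥ (2/3) * ∑ x ∈ (X j).erase g, v i x

theorem IsTwoThirdsEFX.eq_singleton {v : ι → α → ℝ} {X : ι → Finset α} (h : IsTwoThirdsEFX v X)
    (hv : ∀ i g, 0 ≤ v i g) {i j : ι} {g : α} (hg : g ∈ X j)
    (hlt : ∑ x ∈ X i, v i x < 2/3 * v i g) : X j = {g} := by
  refine eq_singleton_iff_unique_mem.2 ⟨hg, fun h' hh' => ?_⟩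
  by_contra hne
  have hle : v i g ≤ ∑ x ∈ (X j).erase h', v i x :=
    single_le_sum (fun x _ => hv i x) (mem_erase.2 ⟨Ne.symm hne, hg⟩)
  linarith [h i j h' hh']

end Allocation

namespace TwoThirdsEFXInstance

def bigGoods : Finset (Fin 6) := {0, 1}

def ownGood (i : Fin 3) : Fin 6 := ⟨i + 2, by omega⟩

-- The paper's goods `g₁, g₂` are `0, 1`, and agent `i`'s good `g_{i+3}` is `ownGood i`.
noncomputable def val (i : Fin 3) (g : Fin 6) : ℝ :=
  if g ∈ bigGoods then 1 else if g = ownGood i then 3/5 else 1/100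

theorem ownGood_notMem_bigGoods (i : Fin 3) : ownGood i ∉ bigGoods := by
  fin_cases i <;> decide

theorem ownGood_injective : Function.Injective ownGood := by
  intro i j h
  simpa [ownGood, Fin.ext_iff] using h

theorem val_nonneg (i : Fin 3) (g : Fin 6) : 0 ≤ val i g := by
  unfold val; split_ifs <;> norm_num

theorem val_of_mem_bigGoods {i : Fin 3} {g : Fin 6} (hg : g ∈ bigGoods) : val i g = 1 :=
  if_pos hg

theorem val_ownGood (i : Fin 3) : val i (ownGood i) = 3/5 := by
  simp [val, ownGood_notMem_bigGoods]

theorem val_mem_three_values (i : Fin 3) (g : Fin 6) :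
    val i g ∈ ({1, 3/5, 1/100} : Finset ℝ) := by
  unfold val; split_ifs <;> simp

theorem val_le (i : Fin 3) (g : Fin 6) :
    val i g ≤ 1/100 + 59/100 * (if g = ownGood i then 1 else 0)
      + 99/100 * (if g ∈ bigGoods then 1 else 0) := by
  unfold val; split_ifs <;> norm_num

theorem sum_val_le {s : Finset (Fin 6)} (hs : #s ≤ 2) (i : Fin 3) :
    ∑ x ∈ s, val i x ≤ 61/100 + 99/100 * #(s ∩ bigGoods) := by
  calc ∑ x ∈ s, val i x
      ≤ ∑ x ∈ s, (1/100 + 59/100 * (if x = ownGood i then 1 else 0)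
          + 99/100 * (if x ∈ bigGoods then 1 else 0)) := sum_le_sum fun x _ => val_le i x
    _ = #s / 100 + 59/100 * (if ownGood i ∈ s then 1 else 0) + 99/100 * #(s ∩ bigGoods) := by
      simp only [sum_add_distrib, ← mul_sum, sum_const, sum_ite_eq', sum_boole,
        filter_mem_eq_inter, nsmul_eq_mul]
      ring
    _ ≤ 61/100 + 99/100 * #(s ∩ bigGoods) := by
      have : (#s : ℝ) ≤ 2 := by exact_mod_cast hs
      split_ifs <;> linarith

section

variable {X : Fin 3 → Finset (Fin 6)}

theorem exists_mem_of_mem_bigGoods (hc : ∀ i, #(X i) ≤ 2) (hcrit : NoCriticalGood val X)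
    {g : Fin 6} (hg : g ∈ bigGoods) : ∃ j, g ∈ X j := by
  by_contra! hpool
  have hinter : #(X 0 ∩ bigGoods) ≤ 1 := by
    calc #(X 0 ∩ bigGoods) ≤ #(bigGoods.erase g) :=
          card_le_card fun x hx => mem_erase.2 ⟨fun h => hpool 0 (h ▸ (mem_inter.1 hx).1),
            (mem_inter.1 hx).2⟩
      _ = 1 := by rw [card_erase_of_mem hg]; rfl
  have : (#(X 0 ∩ bigGoods) : ℝ) ≤ 1 := by exact_mod_cast hinter
  linarith [hcrit 0 g hpool, sum_val_le (hc 0) 0, val_of_mem_bigGoods (i := 0) hg]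

theorem sum_val_le_of_disjoint (hc : ∀ i, #(X i) ≤ 2) {c : Fin 3}
    (hcB : Disjoint (X c) bigGoods) :
    ∑ x ∈ X c, val c x ≤ 61/100 := by
  simpa [disjoint_iff_inter_eq_empty.1 hcB] using sum_val_le (hc c) c

theorem eq_singleton_of_mem_bigGoods (hc : ∀ i, #(X i) ≤ 2) (hefx : IsTwoThirdsEFX val X)
    {c : Fin 3} (hcB : Disjoint (X c) bigGoods) {j : Fin 3} {g : Fin 6} (hg : g ∈ bigGoods)
    (hgj : g ∈ X j) : X j = {g} :=
  hefx.eq_singleton (i := c) val_nonneg hgj (by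
    rw [val_of_mem_bigGoods hg]; linarith [sum_val_le_of_disjoint hc hcB])

theorem ownGood_mem (hc : ∀ i, #(X i) ≤ 2) (hcrit : NoCriticalGood val X) {c : Fin 3}
    (hcB : Disjoint (X c) bigGoods) (hsingle : ∀ j ≠ c, ∃ g ∈ bigGoods, X j = {g}) (i : Fin 3) :
    ownGood i ∈ X c := by
  have hlt : ∑ x ∈ X i, val i x < 2 * val i (ownGood i) := by
    rw [val_ownGood]
    by_cases hi : i = c
    · subst hi
      linarith [sum_val_le_of_disjoint hc hcB]
    · obtain ⟨g, hg, hXi⟩ := hsingle i hi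
      rw [hXi, sum_singleton, val_of_mem_bigGoods hg]
      norm_num
  obtain ⟨j, hj⟩ := hcrit.exists_mem hlt
  by_cases hjc : j = c
  · exact hjc ▸ hj
  · obtain ⟨g, hg, hXj⟩ := hsingle j hjc
    rw [hXj, mem_singleton] at hj
    exact absurd (hj ▸ hg) (ownGood_notMem_bigGoods i)

theorem not_isTwoThirdsEFX_and_noCriticalGood (hd : ∀ i j, i ≠ j → Disjoint (X i) (X j))
    (hc : ∀ i, #(X i) ≤ 2) : ¬(IsTwoThirdsEFX val X ∧ NoCriticalGood val X) := by
  rintro ⟨hefx, hcrit⟩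
  obtain ⟨a, ha⟩ := exists_mem_of_mem_bigGoods hc hcrit (g := 0) (by decide)
  obtain ⟨b, hb⟩ := exists_mem_of_mem_bigGoods hc hcrit (g := 1) (by decide)
  obtain ⟨c, hca, hcb⟩ : ∃ c, c ≠ a ∧ c ≠ b := Cardinal.exists_ne_ne_of_three_le (by simp) a b
  have hcB : Disjoint (X c) bigGoods := by
    refine disjoint_left.2 fun g hgc hgB => ?_
    rcases mem_insert.1 hgB with rfl | hg1
    · exact disjoint_left.1 (hd c a hca) hgc ha
    · rw [mem_singleton.1 hg1] at hgc
      exact disjoint_left.1 (hd c b hcb) hgc hb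
  have hXa : X a = {0} := eq_singleton_of_mem_bigGoods hc hefx hcB (by decide) ha
  have hXb : X b = {1} := eq_singleton_of_mem_bigGoods hc hefx hcB (by decide) hb
  have hab : a ≠ b := by rintro rfl; simp [hXa] at hb
  have hsingle : ∀ j ≠ c, ∃ g ∈ bigGoods, X j = {g} := by
    intro j hj
    rcases (by omega : j = a ∨ j = b) with rfl | rfl
    exacts [⟨0, by decide, hXa⟩, ⟨1, by decide, hXb⟩]
  have hcard : #(univ.image ownGood) ≤ #(X c) :=
    card_le_card (image_subset_iff.2 fun i _ => ownGood_mem hc hcrit hcB hsingle i)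
  rw [card_image_of_injective _ ownGood_injective, card_univ, Fintype.card_fin] at hcard
  linarith [hc c]

end

end TwoThirdsEFXInstance

/-- There is a 3-agent, 6-good instance with at most 3 distinct values such that no
partial allocation with bundles of cardinality at most 2 is both 2/3-EFX and free of
critical goods. -/
theorem exists_instance_no_small_partial_23EFX_without_critical :
    ∃ v : Fin 3 → Fin 6 → ℝ,
      (∃ S : Finset ℝ, S.card ≤ 3 ∧ ∀ i g, v i g ∈ S) ∧
      ∀ X : Fin 3 → Finset (Fin 6),
        (∀ i j, i ≠ j → Disjoint (X i) (X j)) →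
        (∀ i, (X i).card ≤ 2) →
        ¬((∀ i j, ∀ g ∈ X j,
              (∑ x ∈ X i, v i x) ≥ (2/3) * ∑ x ∈ (X j).erase g, v i x) ∧
          (∀ i, ∀ g : Fin 6, (∀ j, g ∉ X j) →
              v i g ≤ (1/2) * ∑ x ∈ X i, v i x)) :=
  ⟨TwoThirdsEFXInstance.val, ⟨_, card_le_three, TwoThirdsEFXInstance.val_mem_three_values⟩,
    fun _ => TwoThirdsEFXInstance.not_isTwoThirdsEFX_and_noCriticalGood⟩
end

section
/- In any 3-value instance with values 1 > b > c ≥ 0 where b ≤ 1/2, if a partial allocation X satisfies: (P-c) every agent values her bundle at least as much as any single unallocated good, (P-d) every agent with bundle of size > 1 has no critical good, (P-e) every agent with a singleton bundle has at most one critical good and values it at most 2/3 of her bundle, and additionally there exists an agent s with |X_s| = 2 such that every agent i weakly prefers her own bundle to X_s, then no agent has a critical good in X. -/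
/-!
Empty bundles are handled by (P-c) and bundles of size > 1 by (P-d). For a singleton bundle
`{h}` a critical good `g` satisfies `v h / 2 < v g ≤ 2/3 · v h` by (P-e); since `b ≤ 1/2`, among
the three values only `v h = b`, `v g = c` fits, so `2c > b`. But every good is worth at least
`c`, so the two-good bundle `X s` is worth at least `2c > b = v h` to the agent, who would then
prefer `X s` to her own bundle.
-/

def ThreeValued (b c t : ℝ) : Prop := t = 1 ∨ t = b ∨ t = c

namespace ThreeValued

variable {b c t : ℝ}

theorem low_le (hb : b ≤ 1/2) (hcb : c < b) (ht : ThreeValued b c t) : c ≤ t := by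
  rcases ht with rfl | rfl | rfl <;> linarith

theorem eq_of_half_lt_of_le_two_thirds {x y : ℝ} (hb : b ≤ 1/2) (hcb : c < b)
    (hx : ThreeValued b c x) (hy : ThreeValued b c y) (hlt : x / 2 < y) (hle : y ≤ 2/3 * x) :
    x = b ∧ y = c := by
  rcases hx with rfl | rfl | rfl <;> rcases hy with rfl | rfl | rfl <;>
    first | exact ⟨rfl, rfl⟩ | (exfalso; linarith)

end ThreeValued

theorem no_critical_goods_small_b_general {N M : Type*}
    (b c : ℝ) (hb : b ≤ 1/2) (hcb : c < b)
    (v : N → M → ℝ) (hv : ∀ i g, v i g = 1 ∨ v i g = b ∨ v i g = c)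
    (X : N → Finset M)
    -- (P-c): every agent weakly prefers her bundle to any single unallocated good
    (hPc : ∀ i : N, ∀ g : M, (∀ j, g ∉ X j) →
        (∑ x ∈ X i, v i x) ≥ v i g)
    -- (P-d): agents with bundles of size > 1 have no critical good
    (hPd : ∀ i : N, 1 < (X i).card → ∀ g : M, (∀ j, g ∉ X j) →
        v i g ≤ (1/2) * ∑ x ∈ X i, v i x)
    -- (P-e): agents with singleton bundles have at most one critical good,
    -- valued at most 2/3 of their bundle
    (hPe : ∀ i : N, (X i).card = 1 →
        (∀ g g' : M, (∀ j, g ∉ X j) → (∀ j, g' ∉ X j) →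
          v i g > (1/2) * (∑ x ∈ X i, v i x) →
          v i g' > (1/2) * (∑ x ∈ X i, v i x) → g = g') ∧
        (∀ g : M, (∀ j, g ∉ X j) →
          v i g > (1/2) * (∑ x ∈ X i, v i x) →
          v i g ≤ (2/3) * ∑ x ∈ X i, v i x))
    -- a source with a bundle of two goods, weakly unenvied by everyone
    (s : N) (hs : (X s).card = 2)
    (hsrc : ∀ i : N, (∑ x ∈ X i, v i x) ≥ ∑ x ∈ X s, v i x) :
    ∀ i : N, ∀ g : M, (∀ j, g ∉ X j) →
      v i g ≤ (1/2) * ∑ x ∈ X i, v i x := by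
  intro i g hg
  obtain hcard | hcard | hcard : (X i).card = 0 ∨ (X i).card = 1 ∨ 1 < (X i).card := by omega
  · simpa [Finset.card_eq_zero.mp hcard] using hPc i g hg
  · by_contra! hcrit
    have hcrit_le := (hPe i hcard).2 g hg hcrit
    obtain ⟨h, hXi⟩ := Finset.card_eq_one.mp hcard
    rw [hXi, Finset.sum_singleton] at hcrit hcrit_le
    obtain ⟨hvh, hvg⟩ := ThreeValued.eq_of_half_lt_of_le_two_thirds hb hcb (hv i h) (hv i g)
      (by linarith) hcrit_le
    have hsource : 2 * c ≤ ∑ x ∈ X s, v i x := by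
      simpa [hs] using
        Finset.card_nsmul_le_sum (X s) (v i) c fun x _ => ThreeValued.low_le hb hcb (hv i x)
    have hown := hsrc i
    rw [hXi, Finset.sum_singleton] at hown
    linarith
  · exact hPd i hcard g hg

/-- In a 3-value instance with b ≤ 1/2, under properties (c), (d), (e) and the
existence of an unenvied agent with a bundle of two goods, no agent has a critical good. -/
theorem no_critical_goods_small_b {N M : Type*} [DecidableEq M]
    (b c : ℝ) (hb : b ≤ 1/2) (hb1 : b < 1) (hcb : c < b) (hc : 0 ≤ c)
    (v : N → M → ℝ) (hv : ∀ i g, v i g = 1 ∨ v i g = b ∨ v i g = c)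
    (X : N → Finset M) (hdisj : ∀ i j : N, i ≠ j → Disjoint (X i) (X j))
    -- (P-c): every agent weakly prefers her bundle to any single unallocated good
    (hPc : ∀ i : N, ∀ g : M, (∀ j, g ∉ X j) →
        (∑ x ∈ X i, v i x) ≥ v i g)
    -- (P-d): agents with bundles of size > 1 have no critical good
    (hPd : ∀ i : N, 1 < (X i).card → ∀ g : M, (∀ j, g ∉ X j) →
        v i g ≤ (1/2) * ∑ x ∈ X i, v i x)
    -- (P-e): agents with singleton bundles have at most one critical good,
    -- valued at most 2/3 of their bundle
    (hPe : ∀ i : N, (X i).card = 1 →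
        (∀ g g' : M, (∀ j, g ∉ X j) → (∀ j, g' ∉ X j) →
          v i g > (1/2) * (∑ x ∈ X i, v i x) →
          v i g' > (1/2) * (∑ x ∈ X i, v i x) → g = g') ∧
        (∀ g : M, (∀ j, g ∉ X j) →
          v i g > (1/2) * (∑ x ∈ X i, v i x) →
          v i g ≤ (2/3) * ∑ x ∈ X i, v i x))
    -- a source with a bundle of two goods, weakly unenvied by everyone
    (s : N) (hs : (X s).card = 2)
    (hsrc : ∀ i : N, (∑ x ∈ X i, v i x) ≥ ∑ x ∈ X s, v i x) :
    ∀ i : N, ∀ g : M, (∀ j, g ∉ X j) →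
      v i g ≤ (1/2) * ∑ x ∈ X i, v i x :=
  no_critical_goods_small_b_general b c hb hcb v hv X hPc hPd hPe s hs hsrc
end

section
/- Consider a 3-value instance with values 1 > b > c = 0 and m goods. Define c' = (1/(3m))·min{ |k + ℓ·b| : k, ℓ ∈ {−3m, …, 2m}, k + ℓ·b ≠ 0 }, and define perturbed valuations ṽ_i by replacing every zero value with c'. Then every allocation that is 2/3-EFX under (ṽ_i) is also 2/3-EFX under the original valuations (v_i). -/
/-!
Write `v(S) = p + q b` with `p, q ≤ m` counting the goods of value `1` and `b` in `S`, and note that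
`ṽ(S) = v(S) + z c'` where `z` counts the goods of value `0`. If agent `i` violated 2/3-EFX towards
`T = X_j \ {g}` under `v`, then `x = 2 v(T) - 3 v(X_i)` would be a positive number of the form
`k + l b` with `-3m ≤ k, l ≤ 2m`, hence `x ≥ 3 m c'`. But 2/3-EFX under `ṽ` gives `x ≤ 3 z c'` with
`z ≤ |X_i| ≤ m - 1`, since `X_j` is disjoint from `X_i` and contains `g`. So `c' = 0`, and then `x ≤ 0`.
-/

open Finset

def nonzeroCombinationValues (b : ℝ) (m : ℕ) : Set ℝ :=
  {x : ℝ | ∃ k l : ℤ, -(3 * (m : ℤ)) ≤ k ∧ k ≤ 2 * (m : ℤ) ∧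
    -(3 * (m : ℤ)) ≤ l ∧ l ≤ 2 * (m : ℤ) ∧
    (k : ℝ) + (l : ℝ) * b ≠ 0 ∧ x = |(k : ℝ) + (l : ℝ) * b|}

section Perturbation

variable {b c : ℝ} {m : ℕ}

lemma nonneg_of_mem_nonzeroCombinationValues {x : ℝ} (hx : x ∈ nonzeroCombinationValues b m) :
    0 ≤ x :=
  let ⟨_, _, _, _, _, _, _, hx⟩ := hx; hx ▸ abs_nonneg _

lemma sInf_nonzeroCombinationValues_nonneg : 0 ≤ sInf (nonzeroCombinationValues b m) :=
  Real.sInf_nonneg fun _ => nonneg_of_mem_nonzeroCombinationValues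

lemma perturbation_nonneg (hc : c = 1 / (3 * m) * sInf (nonzeroCombinationValues b m)) :
    0 ≤ c :=
  hc ▸ mul_nonneg (by positivity) sInf_nonzeroCombinationValues_nonneg

lemma three_mul_mul_perturbation_le_abs
    (hc : c = 1 / (3 * m) * sInf (nonzeroCombinationValues b m)) {k l : ℤ}
    (hk₀ : -(3 * (m : ℤ)) ≤ k) (hk₁ : k ≤ 2 * (m : ℤ))
    (hl₀ : -(3 * (m : ℤ)) ≤ l) (hl₁ : l ≤ 2 * (m : ℤ)) (hne : (k : ℝ) + l * b ≠ 0) :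
    3 * m * c ≤ |(k : ℝ) + l * b| := by
  have hmem : |(k : ℝ) + l * b| ∈ nonzeroCombinationValues b m :=
    ⟨k, l, hk₀, hk₁, hl₀, hl₁, hne, rfl⟩
  have hinf : sInf (nonzeroCombinationValues b m) ≤ |(k : ℝ) + l * b| :=
    csInf_le ⟨0, fun _ => nonneg_of_mem_nonzeroCombinationValues⟩ hmem
  rcases Nat.eq_zero_or_pos m with rfl | hm
  · simp
  · rwa [hc, ← mul_assoc, mul_one_div_cancel (by positivity), one_mul]

/-- The key fact: `2 v(T) - 3 v(S)` is either nonpositive or at least `3 m c'`. -/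
lemma three_mul_mul_perturbation_le
    (hc : c = 1 / (3 * m) * sInf (nonzeroCombinationValues b m)) {p q p' q' : ℕ}
    (hp : p ≤ m) (hq : q ≤ m) (hp' : p' ≤ m) (hq' : q' ≤ m)
    (hpos : 0 < 2 * (p' + q' * b) - 3 * (p + q * b)) :
    3 * m * c ≤ 2 * (p' + q' * b) - 3 * (p + q * b) := by
  have hcomb : 2 * ((p' : ℝ) + q' * b) - 3 * (p + q * b) =
      ((2 * p' - 3 * p : ℤ) : ℝ) + ((2 * q' - 3 * q : ℤ) : ℝ) * b := by
    push_cast; ring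
  rw [hcomb] at hpos ⊢
  rw [← abs_of_pos hpos]
  exact three_mul_mul_perturbation_le_abs hc (by omega) (by omega) (by omega) (by omega) hpos.ne'

end Perturbation

section Sums

variable {M : Type*} {u : M → ℝ} {b c : ℝ}

lemma sum_ite_eq_zero_eq (u : M → ℝ) (c : ℝ) (S : Finset M) :
    ∑ x ∈ S, (if u x = 0 then c else u x) = ∑ x ∈ S, u x + #{x ∈ S | u x = 0} * c := by
  classical
  rw [sum_ite, sum_const, nsmul_eq_mul, ← sum_filter_add_sum_filter_not S (u · = 0),
    sum_eq_zero fun x hx => (mem_filter.1 hx).2]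
  ring

lemma exists_sum_eq_natCast_add_natCast_mul (hu : ∀ g, u g = 1 ∨ u g = b ∨ u g = 0)
    (S : Finset M) : ∃ p q : ℕ, p + q ≤ #S ∧ ∑ x ∈ S, u x = p + q * b := by
  classical
  induction S using Finset.induction_on with
  | empty => exact ⟨0, 0, by simp, by simp⟩
  | insert a S ha ih =>
    obtain ⟨p, q, hcard, hsum⟩ := ih
    rw [sum_insert ha, card_insert_of_notMem ha, hsum]
    rcases hu a with h | h | h
    · exact ⟨p + 1, q, by omega, by rw [h]; push_cast; ring⟩
    · exact ⟨p, q + 1, by omega, by rw [h]; push_cast; ring⟩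
    · exact ⟨p, q, by omega, by rw [h, zero_add]⟩

lemma two_mul_sum_le_three_mul_sum_of_perturbed {m : ℕ} {S T : Finset M}
    (hu : ∀ g, u g = 1 ∨ u g = b ∨ u g = 0)
    (hc : c = 1 / (3 * m) * sInf (nonzeroCombinationValues b m))
    (hS : #S < m) (hT : #T ≤ m)
    (h : 2 * ∑ x ∈ T, (if u x = 0 then c else u x) ≤
      3 * ∑ x ∈ S, (if u x = 0 then c else u x)) :
    2 * ∑ x ∈ T, u x ≤ 3 * ∑ x ∈ S, u x := by
  classical
  obtain ⟨p, q, hpq, hSsum⟩ := exists_sum_eq_natCast_add_natCast_mul hu S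
  obtain ⟨p', q', hpq', hTsum⟩ := exists_sum_eq_natCast_add_natCast_mul hu T
  rw [sum_ite_eq_zero_eq, sum_ite_eq_zero_eq] at h
  rw [hSsum, hTsum] at h ⊢
  by_contra! hviol
  have hc₀ := perturbation_nonneg hc
  have hgap := three_mul_mul_perturbation_le hc (by omega) (by omega) (by omega) (by omega)
    (sub_pos.2 hviol)
  have hzS : (#{x ∈ S | u x = 0} : ℝ) + 1 ≤ m := by
    exact_mod_cast (card_filter_le S _).trans_lt hS
  have hzT : 0 ≤ (#{x ∈ T | u x = 0} : ℝ) * c := by positivity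
  have hc_zero : c = 0 := by nlinarith
  subst hc_zero
  linarith

end Sums

theorem perturbation_preserves_23EFX_general {N M : Type*} [Fintype M] [DecidableEq M]
    (m : ℕ) (hm : Fintype.card M = m)
    (b : ℝ) (hb0 : 0 < b)
    (v : N → M → ℝ) (hv : ∀ i g, v i g = 1 ∨ v i g = b ∨ v i g = 0)
    (c' : ℝ)
    (hc' : c' = (1 / (3 * (m : ℝ))) *
        sInf {x : ℝ | ∃ k l : ℤ, -(3 * (m : ℤ)) ≤ k ∧ k ≤ 2 * (m : ℤ) ∧
          -(3 * (m : ℤ)) ≤ l ∧ l ≤ 2 * (m : ℤ) ∧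
          (k : ℝ) + (l : ℝ) * b ≠ 0 ∧ x = |(k : ℝ) + (l : ℝ) * b|})
    (vt : N → M → ℝ)
    (hvt : ∀ i g, vt i g = if v i g = 0 then c' else v i g)
    (X : N → Finset M)
    (hdisj : ∀ i j : N, i ≠ j → Disjoint (X i) (X j))
    (hEFX : ∀ i j : N, ∀ g ∈ X j,
        (∑ x ∈ X i, vt i x) ≥ (2/3) * ∑ x ∈ (X j).erase g, vt i x) :
    ∀ i j : N, ∀ g ∈ X j,
        (∑ x ∈ X i, v i x) ≥ (2/3) * ∑ x ∈ (X j).erase g, v i x := by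
  intro i j g hg
  have hv₀ : ∀ x, 0 ≤ v i x := fun x => by rcases hv i x with h | h | h <;> rw [h] <;> positivity
  rcases eq_or_ne i j with rfl | hij
  · have := sum_le_sum_of_subset_of_nonneg (erase_subset g (X i)) fun x _ _ => hv₀ x
    linarith [sum_nonneg fun x (_ : x ∈ (X i).erase g) => hv₀ x]
  · have hcard : #(X i) + #(X j) ≤ m :=
      hm ▸ card_union_of_disjoint (hdisj i j hij) ▸ card_le_univ _
    have hXj : 0 < #(X j) := card_pos.2 ⟨g, hg⟩
    have hEFXi := hEFX i j g hg
    simp only [hvt] at hEFXi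
    have := two_mul_sum_le_three_mul_sum_of_perturbed (S := X i) (T := (X j).erase g) (hv i) hc'
      (by omega)
      ((card_erase_le).trans (hm ▸ card_le_univ _)) (by linarith)
    linarith

/-- Replacing zero values by the small perturbation c' preserves 2/3-EFX back to the
original valuations. -/
theorem perturbation_preserves_23EFX {N M : Type*} [Fintype M] [DecidableEq M]
    (m : ℕ) (hm : Fintype.card M = m) (hm0 : 0 < m)
    (b : ℝ) (hb0 : 0 < b) (hb1 : b < 1)
    (v : N → M → ℝ) (hv : ∀ i g, v i g = 1 ∨ v i g = b ∨ v i g = 0)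
    (c' : ℝ)
    (hc' : c' = (1 / (3 * (m : ℝ))) *
        sInf {x : ℝ | ∃ k l : ℤ, -(3 * (m : ℤ)) ≤ k ∧ k ≤ 2 * (m : ℤ) ∧
          -(3 * (m : ℤ)) ≤ l ∧ l ≤ 2 * (m : ℤ) ∧
          (k : ℝ) + (l : ℝ) * b ≠ 0 ∧ x = |(k : ℝ) + (l : ℝ) * b|})
    (vt : N → M → ℝ)
    (hvt : ∀ i g, vt i g = if v i g = 0 then c' else v i g)
    (X : N → Finset M)
    (hdisj : ∀ i j : N, i ≠ j → Disjoint (X i) (X j))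
    (hcomplete : ∀ g : M, ∃ i : N, g ∈ X i)
    (hEFX : ∀ i j : N, ∀ g ∈ X j,
        (∑ x ∈ X i, vt i x) ≥ (2/3) * ∑ x ∈ (X j).erase g, vt i x) :
    ∀ i j : N, ∀ g ∈ X j,
        (∑ x ∈ X i, v i x) ≥ (2/3) * ∑ x ∈ (X j).erase g, v i x :=
  perturbation_preserves_23EFX_general m hm b hb0 v hv c' hc' vt hvt X hdisj hEFX
end

section
/- Suppose an agent's bundle history is a finite sequence of sets each of cardinality 1 or 2, where: transitions between same-cardinality bundles strictly increase value; transitions from cardinality 2 to cardinality 1 increase value by a factor strictly greater than 3/2; and transitions from cardinality 1 to cardinality 2 keep at least 2/3 of the value. Then no bundle (as a set with its value and cardinality) is ever repeated: at each step, the current bundle's value strictly exceeds the value of every earlier bundle of the same cardinality. -/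
/-!
Weight a bundle of cardinality 1 by 2 and one of cardinality 2 by 3. The three transition rules say
exactly that the weighted value never decreases, and strictly increases except on a step from
cardinality 1 to cardinality 2. Two such steps cannot be consecutive, so over any two steps the
weighted value strictly increases; between two bundles of the same cardinality the weights cancel.
A single step between equal cardinalities is strict by hypothesis.
-/

theorem Nat.le_of_le_succ_of_le_of_le {α : Type*} [Preorder α] {f : ℕ → α} {T : ℕ}
    (hf : ∀ n < T, f n ≤ f (n + 1)) {s t : ℕ} (hst : s ≤ t) (ht : t ≤ T) : f s ≤ f t := by
  induction t, hst using Nat.le_induction with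
  | base => exact le_rfl
  | succ n _ ih => exact (ih (by omega)).trans (hf n (by omega))

theorem Nat.lt_of_le_succ_of_lt_succ_or_lt_succ {α : Type*} [Preorder α] {f : ℕ → α} {T : ℕ}
    (hle : ∀ n < T, f n ≤ f (n + 1))
    (hlt : ∀ n, n + 1 < T → f n < f (n + 1) ∨ f (n + 1) < f (n + 2))
    {s t : ℕ} (hst : s + 2 ≤ t) (ht : t ≤ T) : f s < f t := by
  have hs2 : f s < f (s + 2) := by
    rcases hlt s (by omega) with h | h
    · exact h.trans_le (hle (s + 1) (by omega))
    · exact (hle s (by omega)).trans_lt h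
  exact hs2.trans_le (Nat.le_of_le_succ_of_le_of_le hle hst ht)

section BundleStep

variable {α : Type*} [Field α]

def bundleWeight (n : ℕ) : α := if n = 1 then 2 else 3

theorem bundleWeight_one : (bundleWeight 1 : α) = 2 := if_pos rfl

theorem bundleWeight_two : (bundleWeight 2 : α) = 3 := if_neg (by decide)

variable [LinearOrder α] [IsStrictOrderedRing α]

theorem bundleWeight_pos (n : ℕ) : 0 < (bundleWeight n : α) := by
  unfold bundleWeight; split_ifs <;> norm_num

structure IsBundleStep (a b : ℕ) (x y : α) : Prop where
  same : b = a → x < y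
  down : a = 2 → b = 1 → 3 / 2 * x < y
  up : a = 1 → b = 2 → 2 / 3 * x ≤ y

variable {a b : ℕ} {x y : α}

theorem IsBundleStep.weight_mul_lt (h : IsBundleStep a b x y) (ha : a = 1 ∨ a = 2)
    (hb : b = 1 ∨ b = 2) (hab : ¬(a = 1 ∧ b = 2)) :
    bundleWeight a * x < bundleWeight b * y := by
  rcases ha with rfl | rfl <;> rcases hb with rfl | rfl
  · rw [bundleWeight_one]; linarith [h.same rfl]
  · exact absurd ⟨rfl, rfl⟩ hab
  · rw [bundleWeight_one, bundleWeight_two]; linarith [h.down rfl rfl]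
  · rw [bundleWeight_two]; linarith [h.same rfl]

theorem IsBundleStep.weight_mul_le (h : IsBundleStep a b x y) (ha : a = 1 ∨ a = 2)
    (hb : b = 1 ∨ b = 2) : bundleWeight a * x ≤ bundleWeight b * y := by
  by_cases hab : a = 1 ∧ b = 2
  · obtain ⟨rfl, rfl⟩ := hab
    rw [bundleWeight_one, bundleWeight_two]
    linarith [h.up rfl rfl]
  · exact (h.weight_mul_lt ha hb hab).le

end BundleStep

theorem no_repeated_bundles_general (T : ℕ) (v : ℕ → ℝ) (k : ℕ → ℕ)
    (hcard : ∀ t ≤ T, k t = 1 ∨ k t = 2)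
    (hsame : ∀ t, t < T → k (t + 1) = k t → v (t + 1) > v t)
    (hdown : ∀ t, t < T → k t = 2 → k (t + 1) = 1 → v (t + 1) > (3/2) * v t)
    (hup : ∀ t, t < T → k t = 1 → k (t + 1) = 2 → v (t + 1) ≥ (2/3) * v t) :
    ∀ t ≤ T, ∀ s < t, k s = k t → v t > v s := by
  have hstep (n : ℕ) (hn : n < T) : IsBundleStep (k n) (k (n + 1)) (v n) (v (n + 1)) :=
    ⟨hsame n hn, hdown n hn, hup n hn⟩
  intro t ht s hst hks
  obtain rfl | hst2 : t = s + 1 ∨ s + 2 ≤ t := by omega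
  · exact hsame s (by omega) hks.symm
  have hweighted : bundleWeight (k s) * v s < bundleWeight (k t) * v t := by
    refine Nat.lt_of_le_succ_of_lt_succ_or_lt_succ (f := fun n => bundleWeight (k n) * v n)
      (fun n hn => (hstep n hn).weight_mul_le (hcard n hn.le) (hcard (n + 1) hn))
      (fun n hn => ?_) hst2 ht
    by_cases hup_n : k n = 1 ∧ k (n + 1) = 2
    · refine .inr ((hstep (n + 1) hn).weight_mul_lt (hcard (n + 1) hn.le) (hcard (n + 2) hn) ?_)
      omega
    · exact .inl ((hstep n (by omega)).weight_mul_lt (hcard n (by omega))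
        (hcard (n + 1) hn.le) hup_n)
  rw [hks] at hweighted
  exact lt_of_mul_lt_mul_left hweighted (bundleWeight_pos _).le

/-- No-repeated-bundles claim: along the history, the current bundle's value strictly
exceeds the value of every earlier bundle of the same cardinality. -/
theorem no_repeated_bundles (T : ℕ) (v : ℕ → ℝ) (k : ℕ → ℕ)
    (hpos : ∀ t ≤ T, 0 < v t)
    (hcard : ∀ t ≤ T, k t = 1 ∨ k t = 2)
    (hsame : ∀ t, t < T → k (t + 1) = k t → v (t + 1) > v t)
    (hdown : ∀ t, t < T → k t = 2 → k (t + 1) = 1 → v (t + 1) > (3/2) * v t)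
    (hup : ∀ t, t < T → k t = 1 → k (t + 1) = 2 → v (t + 1) ≥ (2/3) * v t) :
    ∀ t ≤ T, ∀ s < t, k s = k t → v t > v s :=
  no_repeated_bundles_general T v k hcard hsame hdown hup
end

section
/- Let 1 > b > c > 0 with b > 1/2 and b + c < 2/3, and let k_max be the unique integer with b + (k_max−1)c ≥ 2/3 and b + (k_max−2)c < 2/3. For an additive valuation with values in {1, b, c} and a set X with |X| ≤ k_max containing at most one good of value 1, at most two further goods of value ≥ b, and all remaining goods of value c, and for any g ∈ X: v(X \ {g}) < b + 5/3. -/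
/-!
Removing a good leaves at most `kmax - 1` goods: at most one of value `1`, at most two of
value `b`, and the rest of value `c`. Their value is therefore at most
`1 + 2b + (kmax - 4)c`, which is less than `b + 5/3` since `b + (kmax - 2)c < 2/3`.
-/

open Finset

namespace Finset

variable {ι R : Type*}

theorem sum_le_of_three_valued [Field R] [LinearOrder R] [IsStrictOrderedRing R]
    (s : Finset ι) {f : ι → R} {hi mid lo : R} (hlo : lo ≤ mid) (hmid : mid ≤ hi)
    (hf : ∀ x ∈ s, f x = hi ∨ f x = mid ∨ f x = lo) :
    ∑ x ∈ s, f x ≤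
      #s * lo + #{x ∈ s | f x = hi} * (hi - lo) + #{x ∈ s | f x = mid} * (mid - lo) := by
  rw [natCast_card_filter, natCast_card_filter, ← nsmul_eq_mul, ← sum_const, sum_mul, sum_mul,
    ← sum_add_distrib, ← sum_add_distrib]
  gcongr with x hx
  rcases hf x hx with h | h | h <;> split_ifs <;> linarith

theorem card_le_two_of_forall_not_pairwise_ne [DecidableEq ι] {s : Finset ι}
    (h : ∀ a ∈ s, ∀ b ∈ s, ∀ c ∈ s, a ≠ b → a ≠ c → b ≠ c → False) : #s ≤ 2 :=
  not_lt.1 fun hs => by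
    obtain ⟨a, ha, b, hb, c, hc, hab, hac, hbc⟩ := two_lt_card.1 hs
    exact h a ha b hb c hc hab hac hbc

end Finset

theorem three_b_bound_general {M : Type*} [DecidableEq M]
    (v : M → ℝ) (b c : ℝ) (kmax : ℕ)
    (hb2 : b < 1) (hc : 0 < c) (hcb : c < b)
    (hv : ∀ g : M, v g = 1 ∨ v g = b ∨ v g = c)
    (hk2 : b + ((kmax : ℝ) - 2) * c < 2/3)
    (X : Finset M) (hX : X.card ≤ kmax)
    -- at most one good of value 1
    (hone : ∀ g1 ∈ X, ∀ g2 ∈ X, v g1 = 1 → v g2 = 1 → g1 = g2)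
    -- at most two further goods of value b
    (htwo : ∀ g1 ∈ X, ∀ g2 ∈ X, ∀ g3 ∈ X,
        v g1 = b → v g2 = b → v g3 = b → g1 ≠ g2 → g1 ≠ g3 → g2 ≠ g3 → False) :
    ∀ g ∈ X, (∑ x ∈ X.erase g, v x) < b + 5/3 := by
  intro g hg
  have hsize : (#(X.erase g) : ℝ) ≤ kmax - 1 := by
    rw [le_sub_iff_add_le]
    exact_mod_cast (card_erase_add_one hg).trans_le hX
  have hones : (#{x ∈ X.erase g | v x = 1} : ℝ) ≤ 1 :=
    mod_cast card_le_one.2 fun x hx y hy => by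
      simp only [mem_filter] at hx hy
      exact hone x (mem_of_mem_erase hx.1) y (mem_of_mem_erase hy.1) hx.2 hy.2
  have hbs : (#{x ∈ X.erase g | v x = b} : ℝ) ≤ 2 :=
    mod_cast card_le_two_of_forall_not_pairwise_ne fun x hx y hy z hz => by
      simp only [mem_filter] at hx hy hz
      exact htwo x (mem_of_mem_erase hx.1) y (mem_of_mem_erase hy.1) z (mem_of_mem_erase hz.1)
        hx.2 hy.2 hz.2
  calc ∑ x ∈ X.erase g, v x
      ≤ #(X.erase g) * c + #{x ∈ X.erase g | v x = 1} * (1 - c)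
          + #{x ∈ X.erase g | v x = b} * (b - c) :=
        sum_le_of_three_valued _ hcb.le hb2.le fun x _ => hv x
    _ ≤ (kmax - 1) * c + 1 * (1 - c) + 2 * (b - c) := by
        gcongr; linarith
    _ < b + 5/3 := by linarith

/-- Lemma "Three_b": a bundle with at most one good of value 1, at most two further goods
of value b, and all remaining goods of value c, has value less than b + 5/3 after removing
any single good. -/
theorem three_b_bound {M : Type*} [DecidableEq M]
    (v : M → ℝ) (b c : ℝ) (kmax : ℕ)
    (hb1 : 1/2 < b) (hb2 : b < 1) (hc : 0 < c) (hcb : c < b) (hbc : b + c < 2/3)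
    (hv : ∀ g : M, v g = 1 ∨ v g = b ∨ v g = c)
    (hk1 : b + ((kmax : ℝ) - 1) * c ≥ 2/3)
    (hk2 : b + ((kmax : ℝ) - 2) * c < 2/3)
    (X : Finset M) (hX : X.card ≤ kmax)
    -- at most one good of value 1
    (hone : ∀ g1 ∈ X, ∀ g2 ∈ X, v g1 = 1 → v g2 = 1 → g1 = g2)
    -- at most two further goods of value b
    (htwo : ∀ g1 ∈ X, ∀ g2 ∈ X, ∀ g3 ∈ X,
        v g1 = b → v g2 = b → v g3 = b → g1 ≠ g2 → g1 ≠ g3 → g2 ≠ g3 → False) :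
    ∀ g ∈ X, (∑ x ∈ X.erase g, v x) < b + 5/3 :=
  three_b_bound_general v b c kmax hb2 hc hcb hv hk2 X hX hone htwo
end
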